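/- arXiv:1207.3764 — 4 statements merged into one kernel-verified Lean document; each statement's English description precedes it below -/
import Mathlib

section
/- Let X be a complex Hilbert space, A a bounded self-adjoint operator with closed range, B a bounded skew-adjoint operator with ⟨B a, a'⟩ = 0 for all a, a' ∈ ker A, and C a bounded self-adjoint boundedly invertible operator. Define on X × X the operators L(u,v) = (Au, C⁻¹v) and J(u,v) = (v, −u − Bv). Then: (i) J is boundedly invertible with J⁻¹(x,y) = (−Bx − y, x), so that J⁻¹(a₀, 0) = (−B a₀, a₀) for a₀ ∈ ker A; (ii) for every a₀ ∈ ker A and every a₁ ∈ (ker A)^⊥ with A a₁ = −B a₀, the vector w = (a₁, C a₀) satisfies L w = J⁻¹(a₀, 0); and (iii) for all a₀, a₀' ∈ ker A, ⟨w, J⁻¹(a₀', 0)⟩_{X×X} = ⟨C a₀ + B a₁, a₀'⟩. That is, the restriction of L⁻¹ to J⁻¹ ker(L) has matrix representation equal to that of (C − B A⁻¹ B) restricted to ker A. -/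
section Inverse

variable {R E : Type*} [Ring R] [TopologicalSpace E] [AddCommGroup E] [Module R E]
  {B : E →L[R] E} {J Jinv : E × E →L[R] E × E}

theorem J_comp_Jinv_eq_one (hJ : ∀ u v : E, J (u, v) = (v, -u - B v))
    (hJinv : ∀ x y : E, Jinv (x, y) = (-(B x) - y, x)) : J ∘L Jinv = 1 := by
  refine ContinuousLinearMap.ext fun ⟨x, y⟩ => ?_
  simp [hJinv, hJ]

theorem Jinv_comp_J_eq_one (hJ : ∀ u v : E, J (u, v) = (v, -u - B v))
    (hJinv : ∀ x y : E, Jinv (x, y) = (-(B x) - y, x)) : Jinv ∘L J = 1 := by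
  refine ContinuousLinearMap.ext fun ⟨u, v⟩ => ?_
  simp only [ContinuousLinearMap.comp_apply, hJ, hJinv, one_apply_eq_self]
  congr 1
  abel

end Inverse

theorem ContinuousLinearMap.inner_neg_map_right_of_adjoint_eq_neg {𝕜 E : Type*} [RCLike 𝕜]
    [NormedAddCommGroup E] [InnerProductSpace 𝕜 E] [CompleteSpace E] {B : E →L[𝕜] E}
    (hB : B.adjoint = -B) (x y : E) : inner 𝕜 x (-(B y)) = inner 𝕜 (B x) y := by
  rw [← B.adjoint_inner_right, hB, neg_apply]

theorem stmt_5_general {X : Type*} [NormedAddCommGroup X] [InnerProductSpace ℂ X] [CompleteSpace X]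
    (A B C Cinv : X →L[ℂ] X)
    (hB : ContinuousLinearMap.adjoint B = -B)
    (hC₁ : Cinv ∘L C = 1)
    (L J Jinv : X × X →L[ℂ] X × X)
    (hL : ∀ u v : X, L (u, v) = (A u, Cinv v))
    (hJ : ∀ u v : X, J (u, v) = (v, -u - B v))
    (hJinv : ∀ x y : X, Jinv (x, y) = (-(B x) - y, x)) :
    (J ∘L Jinv = 1 ∧ Jinv ∘L J = 1 ∧ ∀ a₀ : X, Jinv (a₀, 0) = (-(B a₀), a₀)) ∧
    (∀ a₀ ∈ LinearMap.ker (A : X →ₗ[ℂ] X), ∀ a₁ ∈ (LinearMap.ker (A : X →ₗ[ℂ] X))ᗮ,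
      A a₁ = -(B a₀) → L (a₁, C a₀) = Jinv (a₀, 0)) ∧
    (∀ a₀ ∈ LinearMap.ker (A : X →ₗ[ℂ] X), ∀ a₀' ∈ LinearMap.ker (A : X →ₗ[ℂ] X), ∀ a₁ ∈ (LinearMap.ker (A : X →ₗ[ℂ] X))ᗮ,
      A a₁ = -(B a₀) →
        (inner ℂ a₁ ((Jinv (a₀', 0)).1) : ℂ) + (inner ℂ (C a₀) ((Jinv (a₀', 0)).2) : ℂ)
          = (inner ℂ (C a₀ + B a₁) a₀' : ℂ)) := by
  have hJinv_zero : ∀ a₀ : X, Jinv (a₀, 0) = (-(B a₀), a₀) := fun a₀ => by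
    rw [hJinv, sub_zero]
  refine ⟨⟨J_comp_Jinv_eq_one hJ hJinv,
    Jinv_comp_J_eq_one hJ hJinv, hJinv_zero⟩, ?_, ?_⟩
  · intro a₀ _ a₁ _ hAa₁
    have hCinvC : Cinv (C a₀) = a₀ := by
      simpa using DFunLike.congr_fun hC₁ a₀
    rw [hL, hAa₁, hCinvC, hJinv_zero]
  · intro a₀ _ a₀' _ a₁ _ _
    rw [hJinv_zero, B.inner_neg_map_right_of_adjoint_eq_neg hB, inner_add_left, add_comm]

/-- For the Hamiltonian linearization `L(u,v) = (Au, C⁻¹v)`,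
`J(u,v) = (v, −u − Bv)`: (i) `J` is boundedly invertible with
`J⁻¹(x,y) = (−Bx − y, x)`, so `J⁻¹(a₀,0) = (−Ba₀, a₀)`; (ii) if `a₀ ∈ ker A` and
`a₁ ∈ (ker A)^⊥` with `Aa₁ = −Ba₀`, then `w = (a₁, Ca₀)` satisfies `Lw = J⁻¹(a₀,0)`;
(iii) `⟨w, J⁻¹(a₀',0)⟩_{X×X} = ⟨Ca₀ + Ba₁, a₀'⟩`, i.e. `L⁻¹` restricted to
`J⁻¹ ker L` has the matrix representation of `(C − BA⁻¹B)|_{ker A}`. -/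
theorem stmt_5 {X : Type*} [NormedAddCommGroup X] [InnerProductSpace ℂ X] [CompleteSpace X]
    (A B C Cinv : X →L[ℂ] X)
    (hA : IsSelfAdjoint A) (hArange : IsClosed (LinearMap.range (A : X →ₗ[ℂ] X) : Set X))
    (hB : ContinuousLinearMap.adjoint B = -B)
    (hBker : ∀ a ∈ LinearMap.ker (A : X →ₗ[ℂ] X), ∀ a' ∈ LinearMap.ker (A : X →ₗ[ℂ] X), (inner ℂ (B a) a' : ℂ) = 0)
    (hC : IsSelfAdjoint C) (hC₁ : Cinv ∘L C = 1) (hC₂ : C ∘L Cinv = 1)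
    (L J Jinv : X × X →L[ℂ] X × X)
    (hL : ∀ u v : X, L (u, v) = (A u, Cinv v))
    (hJ : ∀ u v : X, J (u, v) = (v, -u - B v))
    (hJinv : ∀ x y : X, Jinv (x, y) = (-(B x) - y, x)) :
    (J ∘L Jinv = 1 ∧ Jinv ∘L J = 1 ∧ ∀ a₀ : X, Jinv (a₀, 0) = (-(B a₀), a₀)) ∧
    (∀ a₀ ∈ LinearMap.ker (A : X →ₗ[ℂ] X), ∀ a₁ ∈ (LinearMap.ker (A : X →ₗ[ℂ] X))ᗮ,
      A a₁ = -(B a₀) → L (a₁, C a₀) = Jinv (a₀, 0)) ∧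
    (∀ a₀ ∈ LinearMap.ker (A : X →ₗ[ℂ] X), ∀ a₀' ∈ LinearMap.ker (A : X →ₗ[ℂ] X), ∀ a₁ ∈ (LinearMap.ker (A : X →ₗ[ℂ] X))ᗮ,
      A a₁ = -(B a₀) →
        (inner ℂ a₁ ((Jinv (a₀', 0)).1) : ℂ) + (inner ℂ (C a₀) ((Jinv (a₀', 0)).2) : ℂ)
          = (inner ℂ (C a₀ + B a₁) a₀' : ℂ)) :=
  stmt_5_general A B C Cinv hB hC₁ L J Jinv hL hJ hJinv
end

section
/- Let X be a complex Hilbert space, M a bounded self-adjoint operator on X, and D a bounded injective operator on X with dense range. Then the negative index of the congruent operator D* ∘ M ∘ D equals the negative index of M: n(D* M D) = n(M), where both sides are elements of ℕ ∪ {∞}. -/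
/-!
The form `x ↦ ⟪x, D* M D x⟫ = ⟪D x, M D x⟫` is negative on the span of a family `e` exactly when
the form of `M` is negative on the span of `D ∘ e`, and negativity forces a family to be linearly
independent; this gives `n(D* M D) ≤ n(M)`. Conversely, by homogeneity negativity only has to be
checked on the compact unit sphere of coefficient vectors, so it is an open condition on the family. A basis of a negative subspace for `M` can therefore be moved into
the dense range of `D`, and pulling it back through `D` gives a negative family for `D* M D`.
-/

open Metric RCLike ContinuousLinearMap
open scoped InnerProductSpace

/-- The negative index `n(S)` of a bounded operator `S` on a complex inner product
space: the supremum (in `ℕ∞`) of the dimensions of finite-dimensional subspaces on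
which the quadratic form `x ↦ ⟨Sx, x⟩` is negative definite. -/
noncomputable def negIndex {X : Type*} [NormedAddCommGroup X] [InnerProductSpace ℂ X]
    (S : X →L[ℂ] X) : ℕ∞ :=
  sSup ((fun V : Submodule ℂ X => (Module.finrank ℂ V : ℕ∞)) ''
    {V : Submodule ℂ X | FiniteDimensional ℂ V ∧
      ∀ x ∈ V, x ≠ 0 → (inner ℂ x (S x) : ℂ).re < 0})

section NegDefFamily

variable {𝕜 X ι : Type*} [RCLike 𝕜] [NormedAddCommGroup X] [InnerProductSpace 𝕜 X] [Fintype ι]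

def NegDefFamily (M : X →L[𝕜] X) (e : ι → X) : Prop :=
  ∀ c : ι → 𝕜, c ≠ 0 → re ⟪∑ i, c i • e i, M (∑ i, c i • e i)⟫_𝕜 < 0

lemma re_inner_smul_map_smul (M : X →L[𝕜] X) (a : 𝕜) (v : X) :
    re ⟪a • v, M (a • v)⟫_𝕜 = ‖a‖ ^ 2 * re ⟪v, M v⟫_𝕜 := by
  rw [map_smul, inner_smul_left, inner_smul_right, ← mul_assoc, RCLike.conj_mul, ← ofReal_pow,
    re_ofReal_mul]

lemma sum_smul_smul (a : 𝕜) (c : ι → 𝕜) (e : ι → X) :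
    ∑ i, (a • c) i • e i = a • ∑ i, c i • e i := by
  simp only [Finset.smul_sum, Pi.smul_apply, smul_eq_mul, mul_smul]

lemma negDefFamily_iff_forall_mem_sphere (M : X →L[𝕜] X) (e : ι → X) :
    NegDefFamily M e ↔
      ∀ c ∈ sphere (0 : ι → 𝕜) 1, re ⟪∑ i, c i • e i, M (∑ i, c i • e i)⟫_𝕜 < 0 := by
  refine ⟨fun he c hc => he c (ne_zero_of_mem_unit_sphere ⟨c, hc⟩), fun he c hc => ?_⟩
  have hc' : 0 < ‖c‖ := norm_pos_iff.2 hc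
  have hunit : ((‖c‖⁻¹ : ℝ) : 𝕜) • c ∈ sphere (0 : ι → 𝕜) 1 := by
    rw [mem_sphere_zero_iff_norm, norm_smul, norm_ofReal, abs_inv, abs_norm,
      inv_mul_cancel₀ hc'.ne']
  have := he _ hunit
  rw [sum_smul_smul, re_inner_smul_map_smul] at this
  exact neg_of_mul_neg_right this (sq_nonneg _)

variable (ι) in
lemma isOpen_setOf_negDefFamily (M : X →L[𝕜] X) : IsOpen {e : ι → X | NegDefFamily M e} := by
  have hcont : Continuous fun p : (ι → X) × (ι → 𝕜) =>
      re ⟪∑ i, p.2 i • p.1 i, M (∑ i, p.2 i • p.1 i)⟫_𝕜 := by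
    fun_prop
  simp only [negDefFamily_iff_forall_mem_sphere]
  refine isOpen_iff_mem_nhds.2 fun e he => ?_
  exact (isCompact_sphere _ _).eventually_forall_of_forall_eventually fun c hc =>
    hcont.continuousAt.eventually (gt_mem_nhds (he c hc))

lemma NegDefFamily.exists_mem_of_dense {M : X →L[𝕜] X} {e : ι → X} (he : NegDefFamily M e)
    {s : Set X} (hs : Dense s) : ∃ f : ι → X, (∀ i, f i ∈ s) ∧ NegDefFamily M f := by
  obtain ⟨f, hfs, hf⟩ := (dense_pi Set.univ fun _ _ => hs).exists_mem_open
    (isOpen_setOf_negDefFamily ι M) ⟨e, he⟩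
  exact ⟨f, fun i => hfs i trivial, hf⟩

lemma NegDefFamily.linearIndependent {M : X →L[𝕜] X} {e : ι → X} (he : NegDefFamily M e) :
    LinearIndependent 𝕜 e :=
  Fintype.linearIndependent_iff.2 fun c hc =>
    congrFun (by_contra fun h => by simpa [hc] using he c h)

lemma negDefFamily_adjoint_comp_comp_iff [CompleteSpace X] (M D : X →L[𝕜] X) (e : ι → X) :
    NegDefFamily (adjoint D ∘L M ∘L D) e ↔ NegDefFamily M (D ∘ e) := by
  simp only [NegDefFamily, comp_apply, adjoint_inner_right]
  simp only [map_sum, map_smul, Function.comp_apply]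

lemma exists_negDefFamily_of_submodule {M : X →L[𝕜] X} (V : Submodule 𝕜 X)
    [FiniteDimensional 𝕜 V] (hV : ∀ x ∈ V, x ≠ 0 → re ⟪x, M x⟫_𝕜 < 0) :
    ∃ e : Fin (Module.finrank 𝕜 V) → X, NegDefFamily M e := by
  let b := Module.finBasis 𝕜 V
  refine ⟨fun i => b i, fun c hc => hV _ (V.sum_mem fun i _ => V.smul_mem _ (b i).2) ?_⟩
  exact fun h => hc (funext (Fintype.linearIndependent_iff.1
    (b.linearIndependent.map' V.subtype V.ker_subtype) c h))

end NegDefFamily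

section NegIndex

variable {X : Type*} [NormedAddCommGroup X] [InnerProductSpace ℂ X]

lemma natCast_le_negIndex {S : X →L[ℂ] X} {n : ℕ} {e : Fin n → X} (he : NegDefFamily S e) :
    (n : ℕ∞) ≤ negIndex S := by
  refine le_sSup ⟨Submodule.span ℂ (Set.range e),
    ⟨FiniteDimensional.span_of_finite ℂ (Set.finite_range e), fun x hx hx0 => ?_⟩, ?_⟩
  · obtain ⟨c, rfl⟩ := (Submodule.mem_span_range_iff_exists_fun ℂ).1 hx
    exact he c (by rintro rfl; simp at hx0)
  · simp only [finrank_span_eq_card he.linearIndependent, Fintype.card_fin]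

lemma negIndex_le_of_forall_negDefFamily {S T : X →L[ℂ] X}
    (h : ∀ n (e : Fin n → X), NegDefFamily S e → ∃ f : Fin n → X, NegDefFamily T f) :
    negIndex S ≤ negIndex T := by
  refine sSup_le ?_
  rintro _ ⟨V, ⟨hV, hneg⟩, rfl⟩
  obtain ⟨e, he⟩ := exists_negDefFamily_of_submodule V hneg
  obtain ⟨f, hf⟩ := h _ e he
  exact natCast_le_negIndex hf

end NegIndex

theorem stmt_9_general {X : Type*} [NormedAddCommGroup X] [InnerProductSpace ℂ X] [CompleteSpace X]
    (M D : X →L[ℂ] X) (hDrange : DenseRange ⇑D) :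
    negIndex ((ContinuousLinearMap.adjoint D) ∘L M ∘L D) = negIndex M := by
  refine le_antisymm (negIndex_le_of_forall_negDefFamily fun n e he =>
    ⟨D ∘ e, (negDefFamily_adjoint_comp_comp_iff M D e).1 he⟩)
    (negIndex_le_of_forall_negDefFamily fun n e he => ?_)
  obtain ⟨f, hfD, hf⟩ := he.exists_mem_of_dense hDrange
  choose x hx using hfD
  refine ⟨x, (negDefFamily_adjoint_comp_comp_iff M D x).2 ?_⟩
  rwa [show D ∘ x = f from funext hx]

/-- For `M` bounded self-adjoint and `D` bounded injective with dense
range, the congruence `D* M D` has the same negative index as `M`. -/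
theorem stmt_9 {X : Type*} [NormedAddCommGroup X] [InnerProductSpace ℂ X] [CompleteSpace X]
    (M D : X →L[ℂ] X) (hM : IsSelfAdjoint M)
    (hDinj : Function.Injective ⇑D) (hDrange : DenseRange ⇑D) :
    negIndex ((ContinuousLinearMap.adjoint D) ∘L M ∘L D) = negIndex M :=
  stmt_9_general M D hDrange
end

section
/- Let V : ℝ → ℝ be twice continuously differentiable, E ∈ ℝ, and U₋ < U₊ real numbers such that V(U₋) = V(U₊) = E, V(u) < E for all u ∈ (U₋, U₊), V'(U₋) ≠ 0 and V'(U₊) ≠ 0. Then the improper integral L = (1/√2) ∫_{U₋}^{U₊} du/√(E − V(u)) is finite, and there exists a twice continuously differentiable function u : ℝ → ℝ satisfying u''(x) = −V'(u(x)) for all x, the energy relation (1/2)u'(x)² + V(u(x)) = E for all x, with range equal to [U₋, U₊], and u is periodic with period 2L. -/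
/-!
Factor `E - V(u) = (u - U₋)(U₊ - u) G(u)` with `G` continuous (a second divided difference) and
positive on `[U₋, U₊]`; at the endpoints positivity is exactly `V'(U±) ≠ 0`. The substitution
`u = U₋ + (U₊ - U₋) sin² θ` turns the energy relation into the autonomous equation
`θ' = √(G(u)/2)`, whose right-hand side is positive, continuous and `π`-periodic in `θ`. Hence `θ`
is an increasing bijection of `ℝ` which gains `π` in time `∫₀^π dθ / √(G/2)`, and the same
substitution in the integral defining `L` shows that it converges and that this time is `2L`.
Newton's equation comes from differentiating the energy wherever `u' ≠ 0`; the turning points are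
countable, so the derivative extends across them.
-/

open Set Filter Function Real Topology MeasureTheory

namespace PhasePlane

lemma hasDerivAt_sub_mul_of_continuousAt {k : ℝ → ℝ} {x : ℝ} (hk : ContinuousAt k x) :
    HasDerivAt (fun s => (s - x) * k s) (k x) x := by
  rw [hasDerivAt_iff_tendsto_slope]
  refine (hk.tendsto.mono_left nhdsWithin_le_nhds).congr' ?_
  filter_upwards [self_mem_nhdsWithin] with s hs
  rw [slope_def_field, sub_self, zero_mul, sub_zero, mul_div_cancel_left₀ _ (sub_ne_zero.2 hs)]

lemma exists_continuous_eq_sub_mul_sub_mul {f : ℝ → ℝ} {a b : ℝ} (hf : Continuous f)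
    (hfa : DifferentiableAt ℝ f a) (hfb : DifferentiableAt ℝ f b) (hab : a ≠ b)
    (ha : f a = 0) (hb : f b = 0) :
    ∃ G : ℝ → ℝ, Continuous G ∧ ∀ s, f s = (s - a) * (s - b) * G s := by
  set h := dslope f a
  have hfac : ∀ s, f s = (s - a) * h s := fun s => by
    simpa [ha] using (sub_smul_dslope f a s).symm
  have hhb : h b = 0 := by
    rw [show h b = dslope f a b from rfl, dslope_of_ne f hab.symm, slope_def_field, ha, hb]
    simp
  refine ⟨dslope h b, continuous_iff_continuousAt.2 fun s => ?_, fun s => ?_⟩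
  · rcases eq_or_ne s b with rfl | hsb
    · exact continuousAt_dslope_same.2 ((differentiableAt_dslope_of_ne hab.symm).2 hfb)
    refine (continuousAt_dslope_of_ne hsb).2 ?_
    rcases eq_or_ne s a with rfl | hsa
    · exact continuousAt_dslope_same.2 hfa
    · exact (continuousAt_dslope_of_ne hsa).2 hf.continuousAt
  · have := sub_smul_dslope h b s
    rw [hhb, smul_eq_mul, sub_zero] at this
    rw [hfac s, ← this]
    ring

lemma pos_on_Icc_of_eq_sub_mul_sub_mul {f G : ℝ → ℝ} {a b : ℝ} (hab : a < b)
    (hG : Continuous G) (hfac : ∀ s, f s = (s - a) * (s - b) * G s)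
    (hneg : ∀ s ∈ Ioo a b, f s < 0) (ha : deriv f a ≠ 0) (hb : deriv f b ≠ 0) :
    ∀ s ∈ Icc a b, 0 < G s := by
  have hda : deriv f a = (a - b) * G a := by
    rw [show f = fun s => (s - a) * ((s - b) * G s) from funext fun s => by rw [hfac]; ring]
    exact (hasDerivAt_sub_mul_of_continuousAt (by fun_prop)).deriv
  have hdb : deriv f b = (b - a) * G b := by
    rw [show f = fun s => (s - b) * ((s - a) * G s) from funext fun s => by rw [hfac]; ring]
    exact (hasDerivAt_sub_mul_of_continuousAt (by fun_prop)).deriv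
  have hpos : ∀ s ∈ Ioo a b, 0 < G s := fun s hs => by
    have := hneg s hs
    rw [hfac] at this
    nlinarith [mul_neg_of_pos_of_neg (sub_pos.2 hs.1) (sub_neg.2 hs.2)]
  have hnonneg : Icc a b ⊆ {s | 0 ≤ G s} := by
    rw [← closure_Ioo hab.ne]
    exact closure_minimal (fun s hs => (hpos s hs).le) (isClosed_le continuous_const hG)
  intro s hs
  rcases eq_or_ne s a with rfl | hsa
  · exact (hnonneg hs).lt_of_ne' fun h => ha (by rw [hda, h, mul_zero])
  rcases eq_or_ne s b with rfl | hsb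
  · exact (hnonneg hs).lt_of_ne' fun h => hb (by rw [hdb, h, mul_zero])
  exact hpos s ⟨hs.1.lt_of_ne' hsa, hs.2.lt_of_ne hsb⟩

lemma hasDerivAt_of_hasDerivAt_off_countable {B : Type*} [NormedAddCommGroup B]
    [NormedSpace ℝ B] [CompleteSpace B] {f g : ℝ → B} {s : Set ℝ} (hs : s.Countable)
    (hf : Continuous f) (hg : Continuous g) (hd : ∀ x ∉ s, HasDerivAt f (g x) x) (x : ℝ) :
    HasDerivAt f (g x) x := by
  have hprim : f = fun y => f 0 + ∫ t in (0 : ℝ)..y, g t := by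
    funext y
    rw [integral_eq_of_hasDerivAt_off_countable f g hs hf.continuousOn
      (fun t ht => hd t ht.2) (hg.intervalIntegrable _ _)]
    abel
  rw [hprim]
  exact (hg.integral_hasStrictDerivAt 0 x).hasDerivAt.const_add _

lemma hasDerivAt_of_hasDerivAt_sq {f : ℝ → ℝ} {d x : ℝ} (hfc : ContinuousAt f x)
    (hfx : f x ≠ 0) (hd : HasDerivAt (fun y => f y ^ 2) d x) :
    HasDerivAt f (d / (2 * f x)) x := by
  wlog hpos : 0 < f x generalizing f
  · have := this (f := fun y => -f y) hfc.neg (neg_ne_zero.2 hfx) (by simpa using hd)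
      (neg_pos.2 (hfx.lt_or_gt.resolve_right hpos))
    simpa [div_neg] using this.fun_neg
  have hsq := hd.sqrt (pow_ne_zero 2 hfx)
  rw [Real.sqrt_sq hpos.le] at hsq
  refine hsq.congr_of_eventuallyEq ?_
  filter_upwards [hfc.eventually (lt_mem_nhds hpos)] with y hy
  exact (Real.sqrt_sq hy.le).symm

lemma contDiff_two_of_hasDerivAt {u p q : ℝ → ℝ} (hu : ∀ x, HasDerivAt u (p x) x)
    (hp : ∀ x, HasDerivAt p (q x) x) (hq : Continuous q) : ContDiff ℝ 2 u := by
  have hdu : deriv u = p := funext fun x => (hu x).deriv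
  have hdp : deriv p = q := funext fun x => (hp x).deriv
  rw [show (2 : WithTop ℕ∞) = 1 + 1 from rfl, contDiff_succ_iff_deriv, hdu,
    contDiff_one_iff_deriv, hdp]
  exact ⟨fun x => (hu x).differentiableAt, by simp, fun x => (hp x).differentiableAt, hq⟩

lemma exists_orderIso_hasDerivAt_of_periodic {F : ℝ → ℝ} {T : ℝ} (hF : Continuous F)
    (hpos : ∀ η, 0 < F η) (hper : Periodic F T) (hT : 0 < T) :
    ∃ θ : ℝ ≃o ℝ, (∀ x, HasDerivAt θ (F (θ x)) x) ∧
      ∀ x, θ (x + ∫ η in (0 : ℝ)..T, (F η)⁻¹) = θ x + T := by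
  have hg : Continuous fun η => (F η)⁻¹ := hF.inv₀ fun η => (hpos η).ne'
  have hgpos : ∀ η, 0 < (F η)⁻¹ := fun η => inv_pos.2 (hpos η)
  have hgper : Periodic (fun η => (F η)⁻¹) T := fun η => by simp only [hper η]
  set Θ : ℝ → ℝ := fun y => ∫ η in (0 : ℝ)..y, (F η)⁻¹
  have hΘ : ∀ y, HasDerivAt Θ (F y)⁻¹ y := fun y =>
    (hg.integral_hasStrictDerivAt 0 y).hasDerivAt
  have hmono : StrictMono Θ := strictMono_of_hasDerivAt_pos hΘ hgpos
  have hsurj : Surjective Θ :=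
    (continuous_iff_continuousAt.2 fun y => (hΘ y).continuousAt).surjective
      (hgper.tendsto_atTop_intervalIntegral_of_pos' (hg.intervalIntegrable _ _) hgpos hT)
      (hgper.tendsto_atBot_intervalIntegral_of_pos' (hg.intervalIntegrable _ _) hgpos hT)
  refine ⟨(hmono.orderIsoOfSurjective Θ hsurj).symm, fun x => ?_, fun x => ?_⟩
  · simpa using (hΘ _).of_local_left_inverse (OrderIso.continuous _).continuousAt
      (inv_ne_zero (hpos _).ne')
      (Eventually.of_forall (hmono.orderIsoOfSurjective_self_symm_apply Θ hsurj))
  · obtain ⟨y, rfl⟩ := hsurj x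
    have hshift : Θ y + Θ T = Θ (y + T) := by
      simp only [Θ]
      rw [hgper.intervalIntegral_add_eq_add 0 y fun _ _ => hg.intervalIntegrable _ _, zero_add]
    rw [hshift, hmono.orderIsoOfSurjective_symm_apply_self,
      hmono.orderIsoOfSurjective_symm_apply_self]

lemma integral_eq_two_mul_integral_half_of_symm {f : ℝ → ℝ} {T : ℝ} (hf : Continuous f)
    (hsymm : ∀ x, f (T - x) = f x) :
    ∫ x in (0 : ℝ)..T, f x = 2 * ∫ x in (0 : ℝ)..T / 2, f x := by
  have hrefl : ∫ x in T / 2..T, f x = ∫ x in (0 : ℝ)..T / 2, f x := by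
    have := intervalIntegral.integral_comp_sub_left f T (a := 0) (b := T / 2)
    simp only [hsymm, sub_zero, show T - T / 2 = T / 2 by ring] at this
    exact this.symm
  rw [← intervalIntegral.integral_add_adjacent_intervals (hf.intervalIntegrable 0 (T / 2))
    (hf.intervalIntegrable _ T), hrefl]
  ring

noncomputable def sinSqInterp (a b η : ℝ) : ℝ := a + (b - a) * sin η ^ 2

section sinSqInterp

variable {a b : ℝ}

lemma continuous_sinSqInterp : Continuous (sinSqInterp a b) := by
  unfold sinSqInterp; fun_prop

lemma hasDerivAt_sinSqInterp (η : ℝ) :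
    HasDerivAt (sinSqInterp a b) ((b - a) * sin (2 * η)) η := by
  refine ((((hasDerivAt_sin η).pow 2).const_mul (b - a)).const_add a).congr_deriv ?_
  rw [sin_two_mul]
  ring

lemma sinSqInterp_mem_Icc (hab : a ≤ b) (η : ℝ) : sinSqInterp a b η ∈ Icc a b := by
  have := sin_sq_le_one η
  constructor <;> simp only [sinSqInterp] <;> nlinarith [sq_nonneg (sin η)]

lemma sinSqInterp_add_pi (η : ℝ) : sinSqInterp a b (η + π) = sinSqInterp a b η := by
  simp [sinSqInterp, sin_add_pi]

lemma sinSqInterp_pi_sub (η : ℝ) : sinSqInterp a b (π - η) = sinSqInterp a b η := by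
  simp [sinSqInterp, sin_pi_sub]

lemma strictMonoOn_sinSqInterp (hab : a < b) :
    StrictMonoOn (sinSqInterp a b) (Icc 0 (π / 2)) := by
  intro x hx y hy hxy
  have hsin : sin x < sin y :=
    strictMonoOn_sin ⟨by linarith [hx.1, pi_pos], hx.2⟩ ⟨by linarith [hy.1, pi_pos], hy.2⟩
      hxy
  have hx0 : 0 ≤ sin x := sin_nonneg_of_nonneg_of_le_pi hx.1 (by linarith [hx.2, pi_pos])
  simp only [sinSqInterp]
  gcongr

lemma sinSqInterp_image_Icc (hab : a ≤ b) : sinSqInterp a b '' Icc 0 (π / 2) = Icc a b := by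
  refine Subset.antisymm ?_ ?_
  · rintro _ ⟨η, -, rfl⟩
    exact sinSqInterp_mem_Icc hab η
  have := intermediate_value_Icc pi_div_two_pos.le
    (continuous_sinSqInterp (a := a) (b := b)).continuousOn
  simpa [sinSqInterp] using this

lemma range_sinSqInterp (hab : a ≤ b) : range (sinSqInterp a b) = Icc a b :=
  (range_subset_iff.2 (sinSqInterp_mem_Icc hab)).antisymm
    (sinSqInterp_image_Icc hab ▸ image_subset_range _ _)

lemma sub_mul_sub_sinSqInterp (η : ℝ) :
    (sinSqInterp a b η - a) * (b - sinSqInterp a b η) = ((b - a) * sin (2 * η) / 2) ^ 2 := by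
  simp only [sinSqInterp, sin_two_mul]
  linear_combination (-(b - a) ^ 2 * sin η ^ 2) * sin_sq_add_cos_sq η

end sinSqInterp

noncomputable def phaseSpeed (G : ℝ → ℝ) (a b η : ℝ) : ℝ :=
  √(G (sinSqInterp a b η) / 2)

section phaseSpeed

variable {G : ℝ → ℝ} {a b : ℝ}

lemma continuous_phaseSpeed (hab : a ≤ b) (hG : ContinuousOn G (Icc a b)) :
    Continuous (phaseSpeed G a b) := by
  have := hG.comp_continuous continuous_sinSqInterp (sinSqInterp_mem_Icc hab)
  exact (this.div_const 2).sqrt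

lemma phaseSpeed_pos (hab : a ≤ b) (hGpos : ∀ s ∈ Icc a b, 0 < G s) (η : ℝ) :
    0 < phaseSpeed G a b η :=
  sqrt_pos.2 (half_pos (hGpos _ (sinSqInterp_mem_Icc hab η)))

lemma continuous_inv_phaseSpeed (hab : a ≤ b) (hG : ContinuousOn G (Icc a b))
    (hGpos : ∀ s ∈ Icc a b, 0 < G s) : Continuous fun η => (phaseSpeed G a b η)⁻¹ :=
  (continuous_phaseSpeed hab hG).inv₀ fun η => (phaseSpeed_pos hab hGpos η).ne'

lemma periodic_phaseSpeed : Periodic (phaseSpeed G a b) π := fun η => by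
  rw [phaseSpeed, sinSqInterp_add_pi, phaseSpeed]

lemma phaseSpeed_pi_sub (η : ℝ) : phaseSpeed G a b (π - η) = phaseSpeed G a b η := by
  rw [phaseSpeed, sinSqInterp_pi_sub, phaseSpeed]

lemma energy_sinSqInterp {V : ℝ → ℝ} {E : ℝ} (hab : a ≤ b)
    (hGpos : ∀ s ∈ Icc a b, 0 < G s)
    (hVG : ∀ s, E - V s = (s - a) * (b - s) * G s) (η : ℝ) :
    1 / 2 * ((b - a) * sin (2 * η) * phaseSpeed G a b η) ^ 2 + V (sinSqInterp a b η) = E := by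
  have hF : phaseSpeed G a b η ^ 2 = G (sinSqInterp a b η) / 2 :=
    sq_sqrt (half_pos (hGpos _ (sinSqInterp_mem_Icc hab η))).le
  have hV := hVG (sinSqInterp a b η)
  rw [sub_mul_sub_sinSqInterp] at hV
  linear_combination (1 / 2 * ((b - a) * sin (2 * η)) ^ 2) * hF - hV

lemma abs_deriv_mul_inv_sqrt_eq (hab : a < b) (hGpos : ∀ s ∈ Icc a b, 0 < G s) {η : ℝ}
    (hη : η ∈ Ioo 0 (π / 2)) :
    |(b - a) * sin (2 * η)| • (1 / √((sinSqInterp a b η - a) * (b - sinSqInterp a b η) *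
      G (sinSqInterp a b η))) = √2 * (phaseSpeed G a b η)⁻¹ := by
  have hk : 0 < (b - a) * sin (2 * η) :=
    mul_pos (sub_pos.2 hab) (sin_pos_of_pos_of_lt_pi (by linarith [hη.1]) (by linarith [hη.2]))
  have hG := hGpos _ (sinSqInterp_mem_Icc hab.le η)
  rw [sub_mul_sub_sinSqInterp, sqrt_mul (sq_nonneg _), sqrt_sq (by positivity), abs_of_pos hk,
    phaseSpeed, sqrt_div hG.le, smul_eq_mul]
  have h2 : √2 ^ 2 = 2 := sq_sqrt zero_le_two
  have := hk.ne'
  field_simp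
  rw [h2, mul_right_comm, mul_div_cancel_left₀ 2 this]

lemma intervalIntegrable_and_integral_inv_sqrt (hab : a < b) (hG : ContinuousOn G (Icc a b))
    (hGpos : ∀ s ∈ Icc a b, 0 < G s) :
    IntervalIntegrable (fun s => 1 / √((s - a) * (b - s) * G s)) volume a b ∧
      ∫ s in a..b, 1 / √((s - a) * (b - s) * G s) =
        √2 * ∫ η in (0 : ℝ)..π / 2, (phaseSpeed G a b η)⁻¹ := by
  have hderiv : ∀ η ∈ Icc 0 (π / 2), HasDerivWithinAt (sinSqInterp a b)
      ((b - a) * sin (2 * η)) (Icc 0 (π / 2)) η := fun η _ =>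
    (hasDerivAt_sinSqInterp η).hasDerivWithinAt
  have hinj := (strictMonoOn_sinSqInterp hab).injOn
  have himage := sinSqInterp_image_Icc hab.le
  have heq := fun η (hη : η ∈ Ioo 0 (π / 2)) => abs_deriv_mul_inv_sqrt_eq hab hGpos hη
  have hcont : Continuous fun η => √2 * (phaseSpeed G a b η)⁻¹ :=
    continuous_const.mul (continuous_inv_phaseSpeed hab.le hG hGpos)
  constructor
  · rw [intervalIntegrable_iff_integrableOn_Icc_of_le hab.le, ← himage,
      integrableOn_image_iff_integrableOn_abs_deriv_smul measurableSet_Icc hderiv hinj,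
      integrableOn_Icc_iff_integrableOn_Ioo]
    exact (hcont.integrableOn_Icc.mono_set Ioo_subset_Icc_self).congr_fun
      (fun η hη => (heq η hη).symm) measurableSet_Ioo
  · rw [intervalIntegral.integral_of_le hab.le, ← integral_Icc_eq_integral_Ioc, ← himage,
      integral_image_eq_integral_abs_deriv_smul measurableSet_Icc hderiv hinj,
      integral_Icc_eq_integral_Ioo, setIntegral_congr_fun measurableSet_Ioo heq,
      intervalIntegral.integral_of_le pi_div_two_pos.le, integral_Ioc_eq_integral_Ioo,
      integral_const_mul]

lemma integral_inv_phaseSpeed_zero_pi (hab : a ≤ b) (hG : ContinuousOn G (Icc a b))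
    (hGpos : ∀ s ∈ Icc a b, 0 < G s) :
    ∫ η in (0 : ℝ)..π, (phaseSpeed G a b η)⁻¹ =
      2 * ∫ η in (0 : ℝ)..π / 2, (phaseSpeed G a b η)⁻¹ :=
  integral_eq_two_mul_integral_half_of_symm (continuous_inv_phaseSpeed hab hG hGpos)
    fun η => by rw [phaseSpeed_pi_sub]

end phaseSpeed

lemma hasDerivAt_neg_deriv_of_energy {V u p : ℝ → ℝ} {E : ℝ} (hV : ContDiff ℝ 1 V)
    (hu : ∀ x, HasDerivAt u (p x) x) (hp : Continuous p)
    (henergy : ∀ x, 1 / 2 * p x ^ 2 + V (u x) = E) (hzero : {x | p x = 0}.Countable) (x : ℝ) :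
    HasDerivAt p (-deriv V (u x)) x := by
  have hucont : Continuous u := continuous_iff_continuousAt.2 fun x => (hu x).continuousAt
  refine hasDerivAt_of_hasDerivAt_off_countable (g := fun y => -deriv V (u y)) hzero hp
    ((hV.continuous_deriv le_rfl).comp hucont).neg (fun x hx => ?_) x
  have hsq : HasDerivAt (fun y => p y ^ 2) (2 * -(deriv V (u x) * p x)) x := by
    rw [show (fun y => p y ^ 2) = fun y => 2 * (E - V (u y)) from
      funext fun y => by linear_combination 2 * henergy y]
    have hVu := (hV.differentiable one_ne_zero (u x)).hasDerivAt.comp x (hu x)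
    exact (hVu.const_sub E).const_mul 2
  refine (hasDerivAt_of_hasDerivAt_sq hp.continuousAt hx hsq).congr_deriv ?_
  field_simp [show p x ≠ 0 from hx]

theorem exists_periodic_solution {V G : ℝ → ℝ} {E a b : ℝ} (hV : ContDiff ℝ 1 V)
    (hab : a < b) (hG : ContinuousOn G (Icc a b)) (hGpos : ∀ s ∈ Icc a b, 0 < G s)
    (hVG : ∀ s, E - V s = (s - a) * (b - s) * G s) :
    ∃ u : ℝ → ℝ, ContDiff ℝ 2 u ∧ (∀ x, deriv (deriv u) x = -deriv V (u x)) ∧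
      (∀ x, 1 / 2 * deriv u x ^ 2 + V (u x) = E) ∧ range u = Icc a b ∧
      Periodic u (∫ η in (0 : ℝ)..π, (phaseSpeed G a b η)⁻¹) := by
  have hF := continuous_phaseSpeed hab.le hG
  have hFpos := phaseSpeed_pos hab.le hGpos
  obtain ⟨θ, hθ, hshift⟩ :=
    exists_orderIso_hasDerivAt_of_periodic hF hFpos periodic_phaseSpeed pi_pos
  set p : ℝ → ℝ := fun x => (b - a) * sin (2 * θ x) * phaseSpeed G a b (θ x)
  have hu : ∀ x, HasDerivAt (sinSqInterp a b ∘ θ) (p x) x := fun x =>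
    (hasDerivAt_sinSqInterp (θ x)).comp x (hθ x)
  have hdu : deriv (sinSqInterp a b ∘ θ) = p := funext fun x => (hu x).deriv
  have hp : Continuous p := by
    have := θ.continuous
    fun_prop
  have hzero : {x | p x = 0}.Countable := by
    refine ((countable_range fun n : ℤ => n * π).preimage
      (f := fun x => 2 * θ x) fun x y h => θ.injective (by simpa using h)).mono fun x hx => ?_
    have : sin (2 * θ x) = 0 := by
      simpa [p, sub_ne_zero.2 hab.ne', (hFpos (θ x)).ne'] using hx
    exact sin_eq_zero_iff.1 this
  have henergy : ∀ x, 1 / 2 * p x ^ 2 + V (sinSqInterp a b (θ x)) = E := fun x =>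
    energy_sinSqInterp hab.le hGpos hVG (θ x)
  have hp' := hasDerivAt_neg_deriv_of_energy hV hu hp henergy hzero
  refine ⟨sinSqInterp a b ∘ θ, contDiff_two_of_hasDerivAt hu hp' ?_, fun x => ?_,
    fun x => ?_, ?_, fun x => ?_⟩
  · exact ((hV.continuous_deriv le_rfl).comp (continuous_sinSqInterp.comp θ.continuous)).neg
  · rw [hdu, (hp' x).deriv]
  · rw [hdu]
    exact henergy x
  · rw [θ.surjective.range_comp, range_sinSqInterp hab.le]
  · simp only [comp_apply, hshift, sinSqInterp_add_pi]

end PhasePlane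

open PhasePlane

/-- Phase-plane existence criterion for periodic orbits.  If `V` is `C²`,
`V(U₋) = V(U₊) = E` with `U₋ < U₊`, `V < E` on `(U₋, U₊)`, and `V'(U₋) ≠ 0 ≠ V'(U₊)`,
then `L = (1/√2)∫_{U₋}^{U₊} du/√(E − V(u))` is finite (the integrand is interval
integrable) and there is a `C²` function `u` with `u'' = −V'(u)`, energy
`(1/2)u'² + V(u) = E`, range `[U₋, U₊]`, periodic with period `2L`. -/
theorem stmt_12 (V : ℝ → ℝ) (hV : ContDiff ℝ 2 V) (E : ℝ) (Um Up : ℝ) (hlt : Um < Up)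
    (hVm : V Um = E) (hVp : V Up = E) (hVin : ∀ u ∈ Set.Ioo Um Up, V u < E)
    (hdm : deriv V Um ≠ 0) (hdp : deriv V Up ≠ 0) :
    IntervalIntegrable (fun s => 1 / Real.sqrt (E - V s)) volume Um Up ∧
    ∃ u : ℝ → ℝ, ContDiff ℝ 2 u ∧
      (∀ x, deriv (deriv u) x = -(deriv V (u x))) ∧
      (∀ x, (1 / 2) * (deriv u x) ^ 2 + V (u x) = E) ∧
      Set.range u = Set.Icc Um Up ∧
      Function.Periodic u
        (2 * ((1 / Real.sqrt 2) * ∫ s in Um..Up, 1 / Real.sqrt (E - V s))) := by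
  have hVd : Differentiable ℝ V := hV.differentiable two_ne_zero
  obtain ⟨G, hG, hfac⟩ := exists_continuous_eq_sub_mul_sub_mul (f := fun s => V s - E)
    (hV.continuous.sub continuous_const) ((hVd Um).sub_const E) ((hVd Up).sub_const E) hlt.ne
    (sub_eq_zero.2 hVm) (sub_eq_zero.2 hVp)
  have hGpos : ∀ s ∈ Icc Um Up, 0 < G s :=
    pos_on_Icc_of_eq_sub_mul_sub_mul hlt hG hfac (fun s hs => sub_neg.2 (hVin s hs))
      (by rwa [deriv_sub_const]) (by rwa [deriv_sub_const])
  have hVG : ∀ s, E - V s = (s - Um) * (Up - s) * G s := fun s => by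
    linear_combination -hfac s
  simp_rw [hVG]
  obtain ⟨hint, hL⟩ := intervalIntegrable_and_integral_inv_sqrt hlt hG.continuousOn hGpos
  obtain ⟨u, hu⟩ := exists_periodic_solution (hV.of_le one_le_two) hlt hG.continuousOn hGpos hVG
  have hperiod : 2 * (1 / √2 * ∫ s in Um..Up, 1 / √((s - Um) * (Up - s) * G s)) =
      ∫ η in (0 : ℝ)..π, (phaseSpeed G Um Up η)⁻¹ := by
    rw [hL, integral_inv_phaseSpeed_zero_pi hlt.le hG.continuousOn hGpos]
    field_simp
  exact ⟨hint, u, hperiod ▸ hu⟩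
end

section
/- Let f : ℝ → ℝ be continuously differentiable, Ω ⊆ ℝ³ open, and u : ℝ × Ω → ℝ a smooth function satisfying ∂ₓ²u = (1 − c²)u − f(u) + a for all (x, a, E, c) ∈ ℝ × Ω, and let T, M : Ω → ℝ be differentiable functions of (a, E, c). Fix (a, E, c) ∈ Ω and define φ₂(x) = det of the 3×3 matrix with rows (∂_a u(x), ∂_a T, ∂_a M), (∂_E u(x), ∂_E T, ∂_E M), (∂_c u(x), ∂_c T, ∂_c M). Then, with L₂[w] = −∂ₓ²w + (1 − c²)w − f'(u)·w, one has for all x: L₂[φ₂](x) = −det[[∂_E T, ∂_E M],[∂_c T, ∂_c M]] + 2c · det[[∂_a T, ∂_a M],[∂_E T, ∂_E M]] · u(x). In particular, L₂[φ₂] differs from 2c · det[[∂_a T, ∂_a M],[∂_E T, ∂_E M]] · u by a constant function. -/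
/-!
Differentiating the profile equation `∂ₓ²u = (1 - c²)u - f(u) + a` in `a`, `E` and `c`, and
commuting `∂ₓ²` past the parameter derivative (symmetry of second derivatives of the `C³` map
`(x, s) ↦ u`), gives `L₂[∂ₐu] = -1`, `L₂[∂_E u] = 0` and `L₂[∂_c u] = 2cu`. Expanding `φ₂`
along its first column writes it as a combination of `∂ₐu`, `∂_E u`, `∂_c u` with constant
cofactors, so by linearity `L₂[φ₂] = -(cofactor of ∂ₐu) + 2c (cofactor of ∂_c u) u`.
-/

open Set Filter Topology

section SecondDerivative

variable {E F : Type*} [NormedAddCommGroup E] [NormedSpace ℝ E]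
  [NormedAddCommGroup F] [NormedSpace ℝ F] {G : E → F} {V : Set E}

theorem contDiffOn_fderiv_apply {m n : WithTop ℕ∞} (hV : IsOpen V) (hG : ContDiffOn ℝ n G V)
    (hmn : m + 1 ≤ n) (v : E) : ContDiffOn ℝ m (fun q => fderiv ℝ G q v) V :=
  (hG.fderiv_of_isOpen hV hmn).clm_apply contDiffOn_const

theorem fderiv_fderiv_apply_comm {x : E} (hV : IsOpen V) (hG : ContDiffOn ℝ 2 G V)
    (hx : x ∈ V) (v w : E) :
    fderiv ℝ (fun q => fderiv ℝ G q w) x v = fderiv ℝ (fun q => fderiv ℝ G q v) x w := by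
  have hd : DifferentiableAt ℝ (fderiv ℝ G) x :=
    ((hG.fderiv_of_isOpen hV le_rfl).differentiableOn one_ne_zero).differentiableAt
      (hV.mem_nhds hx)
  have hsymm : IsSymmSndFDerivAt ℝ G x :=
    (hG.contDiffAt (hV.mem_nhds hx)).isSymmSndFDerivAt (by simp)
  simp only [fderiv_clm_apply hd (differentiableAt_const _)]
  simpa using hsymm.eq v w

end SecondDerivative

section Partial

variable {F : Type*} [NormedAddCommGroup F] [NormedSpace ℝ F]

/- Partial derivatives as derivatives of slices, so that nested `deriv`s of slices of a
two-variable function unfold to iterated partials definitionally. -/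
noncomputable def partialFst (H : ℝ × ℝ → F) (p : ℝ × ℝ) : F :=
  deriv (fun t => H (t, p.2)) p.1

noncomputable def partialSnd (H : ℝ × ℝ → F) (p : ℝ × ℝ) : F :=
  deriv (fun r => H (p.1, r)) p.2

variable {H H₁ H₂ : ℝ × ℝ → F} {U : Set (ℝ × ℝ)} {p : ℝ × ℝ}

theorem partialFst_eq_fderiv (h : DifferentiableAt ℝ H p) :
    partialFst H p = fderiv ℝ H p (1, 0) :=
  (h.hasFDerivAt.comp_hasDerivAt p.1
    ((hasDerivAt_id p.1).prodMk (hasDerivAt_const p.1 p.2))).deriv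

theorem partialSnd_eq_fderiv (h : DifferentiableAt ℝ H p) :
    partialSnd H p = fderiv ℝ H p (0, 1) :=
  (h.hasFDerivAt.comp_hasDerivAt p.2
    ((hasDerivAt_const p.2 p.1).prodMk (hasDerivAt_id p.2))).deriv

theorem hasDerivAt_partialSnd (h : DifferentiableAt ℝ H p) :
    HasDerivAt (fun r => H (p.1, r)) (partialSnd H p) p.2 :=
  (h.comp p.2 ((differentiableAt_const p.1).prodMk differentiableAt_id)).hasDerivAt

theorem partialFst_eq_of_eqOn (hU : IsOpen U) (h : EqOn H₁ H₂ U) (hp : p ∈ U) :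
    partialFst H₁ p = partialFst H₂ p := by
  refine Filter.EventuallyEq.deriv_eq ?_
  filter_upwards [(hU.preimage (continuous_id.prodMk continuous_const)).mem_nhds hp] with t ht
  exact h ht

theorem eqOn_partialFst_fderiv (hU : IsOpen U) (hH : DifferentiableOn ℝ H U) :
    EqOn (partialFst H) (fun q => fderiv ℝ H q (1, 0)) U := fun _ hq =>
  partialFst_eq_fderiv (hH.differentiableAt (hU.mem_nhds hq))

theorem eqOn_partialSnd_fderiv (hU : IsOpen U) (hH : DifferentiableOn ℝ H U) :
    EqOn (partialSnd H) (fun q => fderiv ℝ H q (0, 1)) U := fun _ hq =>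
  partialSnd_eq_fderiv (hH.differentiableAt (hU.mem_nhds hq))

theorem ContDiffOn.partialFst {m n : WithTop ℕ∞} (hU : IsOpen U) (hH : ContDiffOn ℝ n H U)
    (hmn : m + 1 ≤ n) : ContDiffOn ℝ m (partialFst H) U :=
  (contDiffOn_fderiv_apply hU hH hmn _).congr
    (eqOn_partialFst_fderiv hU (hH.of_le (le_add_self.trans hmn)).differentiableOn_one)

theorem ContDiffOn.partialSnd {m n : WithTop ℕ∞} (hU : IsOpen U) (hH : ContDiffOn ℝ n H U)
    (hmn : m + 1 ≤ n) : ContDiffOn ℝ m (partialSnd H) U :=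
  (contDiffOn_fderiv_apply hU hH hmn _).congr
    (eqOn_partialSnd_fderiv hU (hH.of_le (le_add_self.trans hmn)).differentiableOn_one)

theorem partialFst_partialSnd_comm (hU : IsOpen U) (hH : ContDiffOn ℝ 2 H U) (hp : p ∈ U) :
    partialFst (partialSnd H) p = partialSnd (partialFst H) p := by
  have hdiff : ∀ {K : ℝ × ℝ → F}, ContDiffOn ℝ 1 K U → DifferentiableAt ℝ K p := fun hK =>
    hK.differentiableOn_one.differentiableAt (hU.mem_nhds hp)
  have hH' : DifferentiableOn ℝ H U := hH.differentiableOn two_ne_zero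
  calc partialFst (partialSnd H) p
      = fderiv ℝ (fun q => fderiv ℝ H q (0, 1)) p (1, 0) := by
        rw [partialFst_eq_fderiv (hdiff (hH.partialSnd hU le_rfl)),
          ((eqOn_partialSnd_fderiv hU hH').eventuallyEq_of_mem (hU.mem_nhds hp)).fderiv_eq]
    _ = fderiv ℝ (fun q => fderiv ℝ H q (1, 0)) p (0, 1) :=
        fderiv_fderiv_apply_comm hU hH hp _ _
    _ = partialSnd (partialFst H) p := by
        rw [partialSnd_eq_fderiv (hdiff (hH.partialFst hU le_rfl)),
          ((eqOn_partialFst_fderiv hU hH').eventuallyEq_of_mem (hU.mem_nhds hp)).fderiv_eq]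

theorem partialFst_partialFst_partialSnd_comm (hU : IsOpen U) (hH : ContDiffOn ℝ 3 H U)
    (hp : p ∈ U) :
    partialFst (partialFst (partialSnd H)) p = partialSnd (partialFst (partialFst H)) p := by
  rw [partialFst_eq_of_eqOn hU
    (fun q hq => partialFst_partialSnd_comm hU (hH.of_le (by norm_num)) hq) hp]
  exact partialFst_partialSnd_comm hU (hH.partialFst hU (by norm_num)) hp

end Partial

theorem ContDiffOn.comp_prodMap_id {P F : Type*} [NormedAddCommGroup P] [NormedSpace ℝ P]
    [NormedAddCommGroup F] [NormedSpace ℝ F] {n : WithTop ℕ∞} {H : ℝ × P → F} {Ω : Set P}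
    (hH : ContDiffOn ℝ n H (univ ×ˢ Ω)) {γ : ℝ → P} (hγ : ContDiff ℝ n γ) :
    ContDiffOn ℝ n (fun p : ℝ × ℝ => H (p.1, γ p.2)) (univ ×ˢ (γ ⁻¹' Ω)) :=
  hH.comp (contDiff_fst.prodMk (hγ.comp contDiff_snd)).contDiffOn fun _ hp => ⟨trivial, hp.2⟩

section Profile

variable {G : ℝ × ℝ → ℝ} {ω : Set ℝ} {s : ℝ}

theorem contDiff_partialSnd_slice {m n : WithTop ℕ∞} (hω : IsOpen ω)
    (hG : ContDiffOn ℝ n G (univ ×ˢ ω)) (hmn : m + 1 ≤ n) (hs : s ∈ ω) :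
    ContDiff ℝ m (fun x => partialSnd G (x, s)) :=
  (hG.partialSnd (isOpen_univ.prod hω) hmn).comp_contDiff (contDiff_id.prodMk contDiff_const)
    fun _ => ⟨trivial, hs⟩

theorem partialFst_partialFst_partialSnd_of_profile {f P Q : ℝ → ℝ} {P' Q' : ℝ}
    (hf : Differentiable ℝ f) (hω : IsOpen ω) (hG : ContDiffOn ℝ 3 G (univ ×ˢ ω))
    (hprofile : ∀ r ∈ ω, ∀ x,
      partialFst (partialFst G) (x, r) = P r * G (x, r) - f (G (x, r)) + Q r)
    (hs : s ∈ ω) (hP : HasDerivAt P P' s) (hQ : HasDerivAt Q Q' s) (x : ℝ) :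
    partialFst (partialFst (partialSnd G)) (x, s)
      = (P s - deriv f (G (x, s))) * partialSnd G (x, s) + P' * G (x, s) + Q' := by
  have hU : IsOpen ((univ : Set ℝ) ×ˢ ω) := isOpen_univ.prod hω
  have hGx : HasDerivAt (fun r => G (x, r)) (partialSnd G (x, s)) s :=
    hasDerivAt_partialSnd (p := (x, s)) ((hG.differentiableOn (by norm_num)).differentiableAt
      (hU.mem_nhds ⟨trivial, hs⟩))
  have hrhs : HasDerivAt (fun r => P r * G (x, r) - f (G (x, r)) + Q r)
      (P' * G (x, s) + P s * partialSnd G (x, s)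
        - deriv f (G (x, s)) * partialSnd G (x, s) + Q') s :=
    ((hP.mul hGx).sub ((hf _).hasDerivAt.comp s hGx)).add hQ
  have hprofile_near : (fun r => partialFst (partialFst G) (x, r))
      =ᶠ[𝓝 s] fun r => P r * G (x, r) - f (G (x, r)) + Q r := by
    filter_upwards [hω.mem_nhds hs] with r hr using hprofile r hr x
  rw [partialFst_partialFst_partialSnd_comm hU hG ⟨trivial, hs⟩]
  change deriv (fun r => partialFst (partialFst G) (x, r)) s = _
  rw [hprofile_near.deriv_eq, hrhs.deriv]
  ring

end Profile

theorem Matrix.det_fin_three_eq_first_col {R : Type*} [CommRing R]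
    (x y z a₁ a₂ b₁ b₂ c₁ c₂ : R) :
    Matrix.det !![x, a₁, a₂; y, b₁, b₂; z, c₁, c₂]
      = Matrix.det !![b₁, b₂; c₁, c₂] * x - Matrix.det !![a₁, a₂; c₁, c₂] * y
        + Matrix.det !![a₁, a₂; b₁, b₂] * z := by
  rw [Matrix.det_fin_three, Matrix.det_fin_two_of, Matrix.det_fin_two_of, Matrix.det_fin_two_of]
  simp only [Matrix.of_apply, Matrix.cons_val', Matrix.cons_val_zero, Matrix.cons_val_fin_one,
    Matrix.cons_val_one, Matrix.cons_val]
  ring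

theorem deriv_deriv_sum_const_mul {ι : Type*} (t : Finset ι) {w : ι → ℝ → ℝ}
    (hw : ∀ i ∈ t, ContDiff ℝ 2 (w i)) (k : ι → ℝ) (x : ℝ) :
    deriv (deriv fun y => ∑ i ∈ t, k i * w i y) x = ∑ i ∈ t, k i * deriv (deriv (w i)) x := by
  have hderiv :
      deriv (fun y => ∑ i ∈ t, k i * w i y) = fun y => ∑ i ∈ t, k i * deriv (w i) y := by
    ext y
    rw [deriv_fun_sum fun i hi => ((hw i hi).differentiable two_ne_zero y).const_mul _]
    exact Finset.sum_congr rfl fun i hi =>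
      deriv_const_mul _ ((hw i hi).differentiable two_ne_zero y)
  rw [hderiv, deriv_fun_sum fun i hi => ((hw i hi).differentiable_deriv_two x).const_mul _]
  exact Finset.sum_congr rfl fun i hi => deriv_const_mul _ ((hw i hi).differentiable_deriv_two x)

noncomputable def hillOp (f : ℝ → ℝ) (c : ℝ) (v w : ℝ → ℝ) (x : ℝ) : ℝ :=
  -(deriv (deriv w) x) + (1 - c ^ 2) * w x - deriv f (v x) * w x

theorem hillOp_sum {ι : Type*} (f : ℝ → ℝ) (c : ℝ) (v : ℝ → ℝ) (t : Finset ι)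
    {w : ι → ℝ → ℝ} (hw : ∀ i ∈ t, ContDiff ℝ 2 (w i)) (k : ι → ℝ) (x : ℝ) :
    hillOp f c v (fun y => ∑ i ∈ t, k i * w i y) x = ∑ i ∈ t, k i * hillOp f c v (w i) x := by
  rw [hillOp, deriv_deriv_sum_const_mul t hw, Finset.mul_sum, Finset.mul_sum,
    ← Finset.sum_neg_distrib, ← Finset.sum_add_distrib, ← Finset.sum_sub_distrib]
  exact Finset.sum_congr rfl fun i _ => by rw [hillOp]; ring

structure IsProfileFamily (f : ℝ → ℝ) (Ω : Set (ℝ × ℝ × ℝ)) (u : ℝ → ℝ → ℝ → ℝ → ℝ) :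
    Prop where
  isOpen : IsOpen Ω
  contDiffOn :
    ContDiffOn ℝ 3 (fun q : ℝ × ℝ × ℝ × ℝ => u q.1 q.2.1 q.2.2.1 q.2.2.2) (univ ×ˢ Ω)
  deriv_deriv : ∀ x a E c, (a, E, c) ∈ Ω →
    deriv (deriv fun s => u s a E c) x = (1 - c ^ 2) * u x a E c - f (u x a E c) + a

namespace IsProfileFamily

variable {f : ℝ → ℝ} {Ω : Set (ℝ × ℝ × ℝ)} {u : ℝ → ℝ → ℝ → ℝ → ℝ} {a E c : ℝ}

theorem contDiff_deriv_a (hu : IsProfileFamily f Ω u) (hmem : (a, E, c) ∈ Ω) :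
    ContDiff ℝ 2 fun x => deriv (fun s => u x s E c) a :=
  contDiff_partialSnd_slice (hu.isOpen.preimage (by fun_prop))
    (hu.contDiffOn.comp_prodMap_id (γ := fun r => (r, E, c)) (by fun_prop)) (by norm_num) hmem

theorem contDiff_deriv_E (hu : IsProfileFamily f Ω u) (hmem : (a, E, c) ∈ Ω) :
    ContDiff ℝ 2 fun x => deriv (fun s => u x a s c) E :=
  contDiff_partialSnd_slice (hu.isOpen.preimage (by fun_prop))
    (hu.contDiffOn.comp_prodMap_id (γ := fun r => (a, r, c)) (by fun_prop)) (by norm_num) hmem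

theorem contDiff_deriv_c (hu : IsProfileFamily f Ω u) (hmem : (a, E, c) ∈ Ω) :
    ContDiff ℝ 2 fun x => deriv (fun s => u x a E s) c :=
  contDiff_partialSnd_slice (hu.isOpen.preimage (by fun_prop))
    (hu.contDiffOn.comp_prodMap_id (γ := fun r => (a, E, r)) (by fun_prop)) (by norm_num) hmem

theorem hillOp_deriv_a (hf : Differentiable ℝ f) (hu : IsProfileFamily f Ω u)
    (hmem : (a, E, c) ∈ Ω) (x : ℝ) :
    hillOp f c (u · a E c) (fun x => deriv (fun s => u x s E c) a) x = -1 := by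
  have h : deriv (deriv fun x => deriv (fun s => u x s E c) a) x
      = (1 - c ^ 2 - deriv f (u x a E c)) * deriv (fun s => u x s E c) a
        + 0 * u x a E c + 1 :=
    partialFst_partialFst_partialSnd_of_profile hf (hu.isOpen.preimage (by fun_prop))
      (hu.contDiffOn.comp_prodMap_id (γ := fun r => (r, E, c)) (by fun_prop))
      (fun r hr x => hu.deriv_deriv x r E c hr) hmem (hasDerivAt_const a _) (hasDerivAt_id a) x
  rw [hillOp, h]
  ring

theorem hillOp_deriv_E (hf : Differentiable ℝ f) (hu : IsProfileFamily f Ω u)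
    (hmem : (a, E, c) ∈ Ω) (x : ℝ) :
    hillOp f c (u · a E c) (fun x => deriv (fun s => u x a s c) E) x = 0 := by
  have h : deriv (deriv fun x => deriv (fun s => u x a s c) E) x
      = (1 - c ^ 2 - deriv f (u x a E c)) * deriv (fun s => u x a s c) E
        + 0 * u x a E c + 0 :=
    partialFst_partialFst_partialSnd_of_profile hf (hu.isOpen.preimage (by fun_prop))
      (hu.contDiffOn.comp_prodMap_id (γ := fun r => (a, r, c)) (by fun_prop))
      (fun r hr x => hu.deriv_deriv x a r c hr) hmem (hasDerivAt_const E _)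
      (hasDerivAt_const E a) x
  rw [hillOp, h]
  ring

theorem hillOp_deriv_c (hf : Differentiable ℝ f) (hu : IsProfileFamily f Ω u)
    (hmem : (a, E, c) ∈ Ω) (x : ℝ) :
    hillOp f c (u · a E c) (fun x => deriv (fun s => u x a E s) c) x = 2 * c * u x a E c := by
  have hP : HasDerivAt (fun r : ℝ => 1 - r ^ 2) (-(2 * c)) c := by
    simpa using (hasDerivAt_pow 2 c).const_sub 1
  have h : deriv (deriv fun x => deriv (fun s => u x a E s) c) x
      = (1 - c ^ 2 - deriv f (u x a E c)) * deriv (fun s => u x a E s) c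
        + -(2 * c) * u x a E c + 0 :=
    partialFst_partialFst_partialSnd_of_profile hf (hu.isOpen.preimage (by fun_prop))
      (hu.contDiffOn.comp_prodMap_id (γ := fun r => (a, E, r)) (by fun_prop))
      (fun r hr x => hu.deriv_deriv x a E r hr) hmem hP (hasDerivAt_const c a) x
  rw [hillOp, h]
  ring

end IsProfileFamily

theorem stmt_16_general (f : ℝ → ℝ) (hf : ContDiff ℝ 1 f)
    (Ω : Set (ℝ × ℝ × ℝ)) (hΩ : IsOpen Ω)
    (u : ℝ → ℝ → ℝ → ℝ → ℝ)
    (hsmooth : ContDiffOn ℝ (⊤ : ℕ∞)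
      (fun q : ℝ × ℝ × ℝ × ℝ => u q.1 q.2.1 q.2.2.1 q.2.2.2) (Set.univ ×ˢ Ω))
    (hODE : ∀ x a E c, (a, E, c) ∈ Ω →
      deriv (deriv (fun s => u s a E c)) x = (1 - c ^ 2) * u x a E c - f (u x a E c) + a)
    (a E c : ℝ) (hmem : (a, E, c) ∈ Ω)
    (ua uE uc : ℝ → ℝ)
    (hua : ua = fun x => deriv (fun s => u x s E c) a)
    (huE : uE = fun x => deriv (fun s => u x a s c) E)
    (huc : uc = fun x => deriv (fun s => u x a E s) c)
    (Ta TE Tc Ma ME Mc : ℝ)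
    (φ₂ : ℝ → ℝ)
    (hφ₂ : ∀ x, φ₂ x = Matrix.det !![ua x, Ta, Ma; uE x, TE, ME; uc x, Tc, Mc])
    (L2 : (ℝ → ℝ) → ℝ → ℝ)
    (hL2 : ∀ w x, L2 w x
      = -(deriv (deriv w) x) + (1 - c ^ 2) * w x - deriv f (u x a E c) * w x) :
    (∀ x, L2 φ₂ x
      = -(Matrix.det !![TE, ME; Tc, Mc])
        + 2 * c * Matrix.det !![Ta, Ma; TE, ME] * u x a E c) ∧
    (∃ k : ℝ, ∀ x,
      L2 φ₂ x - 2 * c * Matrix.det !![Ta, Ma; TE, ME] * u x a E c = k) := by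
  subst hua huE huc
  have hu : IsProfileFamily f Ω u := ⟨hΩ, hsmooth.of_le (WithTop.coe_le_coe.2 le_top), hODE⟩
  have hf' : Differentiable ℝ f := hf.differentiable one_ne_zero
  let col : Fin 3 → ℝ → ℝ := ![fun x => deriv (fun s => u x s E c) a,
    fun x => deriv (fun s => u x a s c) E, fun x => deriv (fun s => u x a E s) c]
  let cofactor : Fin 3 → ℝ := ![Matrix.det !![TE, ME; Tc, Mc], -Matrix.det !![Ta, Ma; Tc, Mc],
    Matrix.det !![Ta, Ma; TE, ME]]
  have hcol : ∀ i ∈ Finset.univ, ContDiff ℝ 2 (col i) := by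
    intro i _
    fin_cases i
    exacts [hu.contDiff_deriv_a hmem, hu.contDiff_deriv_E hmem, hu.contDiff_deriv_c hmem]
  have hφ : φ₂ = fun x => ∑ i, cofactor i * col i x := by
    ext x
    rw [hφ₂, Matrix.det_fin_three_eq_first_col, Fin.sum_univ_three]
    simp only [cofactor, col, Matrix.cons_val_zero, Matrix.cons_val_one, Matrix.cons_val]
    ring
  have main : ∀ x, L2 φ₂ x = -(Matrix.det !![TE, ME; Tc, Mc])
      + 2 * c * Matrix.det !![Ta, Ma; TE, ME] * u x a E c := fun x => by
    have h₀ : hillOp f c (u · a E c) (col 0) x = -1 := hu.hillOp_deriv_a hf' hmem x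
    have h₁ : hillOp f c (u · a E c) (col 1) x = 0 := hu.hillOp_deriv_E hf' hmem x
    have h₂ : hillOp f c (u · a E c) (col 2) x = 2 * c * u x a E c :=
      hu.hillOp_deriv_c hf' hmem x
    rw [show L2 φ₂ x = hillOp f c (u · a E c) φ₂ x from hL2 φ₂ x, hφ,
      hillOp_sum _ _ _ _ hcol, Fin.sum_univ_three, h₀, h₁, h₂]
    simp only [cofactor, Matrix.cons_val_zero, Matrix.cons_val_one, Matrix.cons_val]
    ring
  exact ⟨main, -(Matrix.det !![TE, ME; Tc, Mc]), fun x => by rw [main x]; ring⟩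

/-- The determinant identity behind the geometric lemma.  With
`u(·; a, E, c)` a smooth family of profile solutions, `T`, `M` differentiable
functions of `(a, E, c)`, and
`φ₂(x) = det [[∂ₐu(x), ∂ₐT, ∂ₐM], [∂_Eu(x), ∂_ET, ∂_EM], [∂_cu(x), ∂_cT, ∂_cM]]`,
the Hill operator `L₂[w] = −∂ₓ²w + (1 − c²)w − f'(u)w` satisfies
`L₂[φ₂] = −det[[T_E, M_E],[T_c, M_c]] + 2c·det[[T_a, M_a],[T_E, M_E]]·u`; in
particular `L₂[φ₂]` differs from `2c·det[[T_a, M_a],[T_E, M_E]]·u` by a constant. -/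
theorem stmt_16 (f : ℝ → ℝ) (hf : ContDiff ℝ 1 f)
    (Ω : Set (ℝ × ℝ × ℝ)) (hΩ : IsOpen Ω)
    (u : ℝ → ℝ → ℝ → ℝ → ℝ)
    (hsmooth : ContDiffOn ℝ (⊤ : ℕ∞)
      (fun q : ℝ × ℝ × ℝ × ℝ => u q.1 q.2.1 q.2.2.1 q.2.2.2) (Set.univ ×ˢ Ω))
    (hODE : ∀ x a E c, (a, E, c) ∈ Ω →
      deriv (deriv (fun s => u s a E c)) x = (1 - c ^ 2) * u x a E c - f (u x a E c) + a)
    (T M : ℝ × ℝ × ℝ → ℝ)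
    (hT : DifferentiableOn ℝ T Ω) (hM : DifferentiableOn ℝ M Ω)
    (a E c : ℝ) (hmem : (a, E, c) ∈ Ω)
    (ua uE uc : ℝ → ℝ)
    (hua : ua = fun x => deriv (fun s => u x s E c) a)
    (huE : uE = fun x => deriv (fun s => u x a s c) E)
    (huc : uc = fun x => deriv (fun s => u x a E s) c)
    (Ta TE Tc Ma ME Mc : ℝ)
    (hTa : Ta = deriv (fun s => T (s, E, c)) a) (hMa : Ma = deriv (fun s => M (s, E, c)) a)
    (hTE : TE = deriv (fun s => T (a, s, c)) E) (hME : ME = deriv (fun s => M (a, s, c)) E)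
    (hTc : Tc = deriv (fun s => T (a, E, s)) c) (hMc : Mc = deriv (fun s => M (a, E, s)) c)
    (φ₂ : ℝ → ℝ)
    (hφ₂ : ∀ x, φ₂ x = Matrix.det !![ua x, Ta, Ma; uE x, TE, ME; uc x, Tc, Mc])
    (L2 : (ℝ → ℝ) → ℝ → ℝ)
    (hL2 : ∀ w x, L2 w x
      = -(deriv (deriv w) x) + (1 - c ^ 2) * w x - deriv f (u x a E c) * w x) :
    (∀ x, L2 φ₂ x
      = -(Matrix.det !![TE, ME; Tc, Mc])
        + 2 * c * Matrix.det !![Ta, Ma; TE, ME] * u x a E c) ∧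
    (∃ k : ℝ, ∀ x,
      L2 φ₂ x - 2 * c * Matrix.det !![Ta, Ma; TE, ME] * u x a E c = k) :=
  stmt_16_general f hf Ω hΩ u hsmooth hODE a E c hmem ua uE uc hua huE huc Ta TE Tc Ma ME Mc φ₂ hφ₂
    L2 hL2
end
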